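/- arXiv:2604.23991 — 2 statements merged into one kernel-verified Lean document; each statement's English description precedes it below -/
import Mathlib

section
/- Fix r ∈ ℂ with r ≠ 0, r² ∈ ℝ, and r ≠ ±i. Then for any λ ∈ ℝ and any δ ∈ ℝ with δ ≠ 0, setting τ = δ/(1 + r^{-2}), l = τ/r, k_A = λ + τ, k_B = λ + τ/r², the matrix M = [[k_A, -l], [-l, k_B]] has real entries k_A, k_B ∈ ℝ, nonzero l, satisfies M·(1, r) = λ·(1, r), and its eigenvalues are exactly λ and λ + δ. -/
/-!
The identity τ (1 + r⁻²) = δ gives trace M = 2λ + δ and det M = λ (λ + δ), so the eigenvalues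
of M are the roots λ and λ + δ of its characteristic polynomial. Writing r² = c with c real
shows that τ, hence k_A and k_B, are real; r ≠ ±i is exactly what makes 1 + r⁻² nonzero.
-/

open Matrix Complex

theorem Matrix.spectrum_fin_two_eq_of_trace_of_det {K : Type*} [Field K]
    (M : Matrix (Fin 2) (Fin 2) K) {μ ν : K} (htr : M.trace = μ + ν) (hdet : M.det = μ * ν) :
    spectrum K M = {μ, ν} := by
  ext x
  have hchar : (algebraMap K _ x - M).det = (x - μ) * (x - ν) := by
    rw [trace_fin_two] at htr
    rw [det_fin_two] at hdet ⊢
    simp only [sub_apply, algebraMap_matrix_apply, Fin.isValue, ↓reduceIte, Fin.reduceEq]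
    linear_combination hdet - x * htr
  rw [spectrum.mem_iff, isUnit_iff_isUnit_det, isUnit_iff_ne_zero, not_not, hchar,
    mul_eq_zero, sub_eq_zero, sub_eq_zero, Set.mem_insert_iff, Set.mem_singleton_iff]

theorem Complex.one_add_inv_sq_ne_zero {r : ℂ} (hri : r ≠ I) (hri' : r ≠ -I) :
    1 + r⁻¹ ^ 2 ≠ 0 := by
  rcases eq_or_ne r 0 with rfl | hr
  · simp
  intro h
  have hfactor : (r - I) * (r + I) = 0 := by
    field_simp at h
    linear_combination h - I_sq
  rcases mul_eq_zero.mp hfactor with h' | h'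
  · exact hri (sub_eq_zero.mp h')
  · exact hri' (eq_neg_of_add_eq_zero_left h')

theorem symmetric_complex_coupling_realization
    (r : ℂ) (hr : r ≠ 0) (hr2 : (r ^ 2).im = 0) (hri : r ≠ I) (hri' : r ≠ -I)
    (lam δ : ℝ) (hδ : δ ≠ 0)
    (τ l kA kB : ℂ)
    (hτ : τ = (δ : ℂ) / (1 + r⁻¹ ^ 2))
    (hl : l = τ / r)
    (hkA : kA = (lam : ℂ) + τ)
    (hkB : kB = (lam : ℂ) + τ / r ^ 2)
    (M : Matrix (Fin 2) (Fin 2) ℂ)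
    (hM : M = !![kA, -l; -l, kB]) :
    kA.im = 0 ∧ kB.im = 0 ∧ l ≠ 0 ∧
      M.mulVec ![1, r] = (lam : ℂ) • ![1, r] ∧
      spectrum ℂ M = {(lam : ℂ), (lam : ℂ) + δ} := by
  have hd : 1 + r⁻¹ ^ 2 ≠ 0 := one_add_inv_sq_ne_zero hri hri'
  have hτd : τ * (1 + r⁻¹ ^ 2) = δ := by rw [hτ]; exact div_mul_cancel₀ _ hd
  obtain ⟨c, hc⟩ : ∃ c : ℝ, r ^ 2 = c := ⟨(r ^ 2).re, Complex.ext rfl (by simp [hr2])⟩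
  have hτ_real : τ = ((δ / (1 + c⁻¹) : ℝ) : ℂ) := by rw [hτ, inv_pow, hc]; push_cast; rfl
  refine ⟨?_, ?_, ?_, ?_, ?_⟩
  · rw [hkA, hτ_real]; norm_cast
  · rw [hkB, hτ_real, hc]; norm_cast
  · rw [hl, hτ]
    exact div_ne_zero (div_ne_zero (ofReal_ne_zero.mpr hδ) hd) hr
  · rw [hM, hkA, hkB, hl]
    ext i
    fin_cases i <;> simp [field]
  · apply spectrum_fin_two_eq_of_trace_of_det
    · rw [hM, trace_fin_two_of, hkA, hkB]
      linear_combination hτd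
    · rw [hM, det_fin_two_of, hkA, hkB, hl]
      linear_combination (lam : ℂ) * hτd
end

section
/- Let M = [[k_A, -l], [-l, k_B]] with l ∈ ℝ, l ≠ 0, and k_A, k_B ∈ ℂ. Suppose M has all eigenvalues real, and (ω₁, ω₂) with ω₁ω₂ ≠ 0 is an eigenvector of M with (real) eigenvalue λ₁. Then r + 1/r ∈ ℝ, where r = ω₂/ω₁. Equivalently, r ∈ ℝ or |r| = 1. -/
/-!
Reading the eigenvector equation row by row gives `l * r = k_A - λ₁` and `l / r = k_B - λ₁`, so
`l * (r + 1/r) = k_A + k_B - 2 λ₁`. The characteristic polynomial of a `2 × 2` matrix is invariant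
under `μ ↦ tr M - μ`, so `k_A + k_B - λ₁` is an eigenvalue as well; both being real, the trace
`k_A + k_B` is real, and since `l` is real and nonzero so is `r + 1/r`. Finally
`Im (r + 1/r) = Im r * (1 - 1/|r|²)`.
-/

open Matrix Complex

namespace Matrix

variable {K : Type*} [Field K]

theorem mem_spectrum_of_mulVec_eq_smul {n : Type*} [Fintype n] [DecidableEq n]
    {M : Matrix n n K} {v : n → K} {μ : K} (hv : v ≠ 0) (h : M *ᵥ v = μ • v) :
    μ ∈ spectrum K M := by
  rw [← spectrum_toLin', ← Module.End.hasEigenvalue_iff_mem_spectrum]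
  exact Module.End.hasEigenvalue_of_hasEigenvector
    ⟨Module.End.mem_eigenspace_iff.mpr (by simpa using h), hv⟩

theorem trace_sub_mem_spectrum_fin_two {M : Matrix (Fin 2) (Fin 2) K} {μ : K}
    (h : μ ∈ spectrum K M) : M.trace - μ ∈ spectrum K M := by
  rw [mem_spectrum_iff_isRoot_charpoly, charpoly_fin_two] at h ⊢
  simp only [Polynomial.IsRoot.def, Polynomial.eval_add, Polynomial.eval_sub,
    Polynomial.eval_pow, Polynomial.eval_mul, Polynomial.eval_X, Polynomial.eval_C] at h ⊢
  linear_combination h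

theorem mul_div_add_div_eq_of_mulVec_eq_smul {a b l μ x y : K} (hx : x ≠ 0) (hy : y ≠ 0)
    (h : !![a, -l; -l, b] *ᵥ ![x, y] = μ • ![x, y]) :
    l * (y / x + x / y) = a + b - 2 * μ := by
  have h₀ := congrFun h 0
  have h₁ := congrFun h 1
  simp only [mulVec_cons, mulVec_empty, add_zero, Pi.add_apply, Pi.smul_apply, smul_eq_mul,
    Function.comp_apply, cons_val_zero, cons_val_one, cons_val_fin_one, head_cons,
    tail_cons] at h₀ h₁
  field_simp
  linear_combination -y * h₀ - x * h₁

end Matrix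

theorem Complex.im_eq_zero_or_norm_eq_one_of_im_add_inv_eq_zero {z : ℂ}
    (h : (z + z⁻¹).im = 0) : z.im = 0 ∨ ‖z‖ = 1 := by
  rw [add_im, inv_im, neg_div, ← sub_eq_add_neg, sub_eq_zero] at h
  refine or_iff_not_imp_left.mpr fun hz => ?_
  have hnormSq : normSq z = 1 := by
    rw [eq_div_iff (fun h0 => hz (by simp [normSq_eq_zero.mp h0]))] at h
    exact mul_left_cancel₀ hz (by linear_combination h)
  rwa [normSq_eq_norm_sq, pow_eq_one_iff_of_nonneg (norm_nonneg z) two_ne_zero] at hnormSq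

theorem real_coupling_complex_detuning_obstruction
    (l : ℝ) (hl : l ≠ 0) (kA kB : ℂ)
    (M : Matrix (Fin 2) (Fin 2) ℂ)
    (hM : M = !![kA, -(l : ℂ); -(l : ℂ), kB])
    (hspec : ∀ μ ∈ spectrum ℂ M, μ.im = 0)
    (ω₁ ω₂ : ℂ) (hω : ω₁ * ω₂ ≠ 0)
    (lam₁ : ℝ)
    (heig : M.mulVec ![ω₁, ω₂] = (lam₁ : ℂ) • ![ω₁, ω₂]) :
    ((ω₂ / ω₁) + 1 / (ω₂ / ω₁)).im = 0 ∧
      ((ω₂ / ω₁).im = 0 ∨ ‖ω₂ / ω₁‖ = 1) := by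
  have hω₁ : ω₁ ≠ 0 := left_ne_zero_of_mul hω
  have hω₂ : ω₂ ≠ 0 := right_ne_zero_of_mul hω
  have hlam : (lam₁ : ℂ) ∈ spectrum ℂ M := mem_spectrum_of_mulVec_eq_smul (by simp [hω₁]) heig
  have htrace : M.trace.im = 0 := by
    simpa using hspec _ (trace_sub_mem_spectrum_fin_two hlam)
  subst hM
  have hsum : (ω₂ / ω₁ + 1 / (ω₂ / ω₁)).im = 0 := by
    have hmul : ((l : ℂ) * (ω₂ / ω₁ + 1 / (ω₂ / ω₁))).im = 0 := by
      rw [one_div_div, mul_div_add_div_eq_of_mulVec_eq_smul hω₁ hω₂ heig]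
      simpa [trace_fin_two_of] using htrace
    rwa [im_ofReal_mul, mul_eq_zero, or_iff_right hl] at hmul
  exact ⟨hsum, im_eq_zero_or_norm_eq_one_of_im_add_inv_eq_zero (by rwa [one_div] at hsum)⟩
end
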